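/- arXiv:2403.10926 — 5 statements merged into one kernel-verified Lean document; each statement's English description precedes it below -/
import Mathlib

section
/- Let (S,d) be a compact metric space and μ a Borel probability measure on S, and let θ be the distance distribution of (S,d,μ). For every ε > 0, if S can be covered by k balls of radius ε/2 (for some positive integer k), then θ([0,ε]) ≥ 1/k. In particular θ([0,ε]) ≥ M(ε/2)⁻¹, where M(ε/2) is the minimal number of balls of radius ε/2 needed to cover S. -/
open MeasureTheory

lemma inv_le_sum_sq {k : ℕ} (hk : 0 < k) (x : Fin k → ENNReal)
    (hx : 1 ≤ ∑ i, x i) : (k : ENNReal)⁻¹ ≤ ∑ i, x i * x i := by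
  have hk0 : (k : ENNReal) ≠ 0 := by exact_mod_cast hk.ne'
  have hkt : (k : ENNReal) ≠ ⊤ := ENNReal.natCast_ne_top k
  have hw : ∑ _i : Fin k, (k : ENNReal)⁻¹ = 1 := by
    rw [Finset.sum_const, Finset.card_univ, Fintype.card_fin, nsmul_eq_mul,
      ENNReal.mul_inv_cancel hk0 hkt]
  have h := ENNReal.rpow_arith_mean_le_arith_mean_rpow Finset.univ
    (fun _ : Fin k => (k : ENNReal)⁻¹) x hw (p := 2) one_le_two
  have hL : ((k : ENNReal)⁻¹ * (k : ENNReal)⁻¹) ≤ (∑ i, (k : ENNReal)⁻¹ * x i) ^ (2 : ℝ) := by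
    rw [← Finset.mul_sum]
    calc (k : ENNReal)⁻¹ * (k : ENNReal)⁻¹
        = ((k : ENNReal)⁻¹ * 1) ^ (2 : ℝ) := by
          rw [mul_one, ENNReal.rpow_two, sq]
      _ ≤ ((k : ENNReal)⁻¹ * ∑ i, x i) ^ (2 : ℝ) := by
          gcongr
  have hR : (∑ i, (k : ENNReal)⁻¹ * x i ^ (2 : ℝ)) = (k : ENNReal)⁻¹ * ∑ i, x i * x i := by
    rw [Finset.mul_sum]
    refine Finset.sum_congr rfl fun i _ => ?_
    rw [ENNReal.rpow_two, sq]
  have key : (k : ENNReal)⁻¹ * (k : ENNReal)⁻¹ ≤ (k : ENNReal)⁻¹ * ∑ i, x i * x i := by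
    calc (k : ENNReal)⁻¹ * (k : ENNReal)⁻¹ ≤ (∑ i, (k : ENNReal)⁻¹ * x i) ^ (2 : ℝ) := hL
      _ ≤ ∑ i, (k : ENNReal)⁻¹ * x i ^ (2 : ℝ) := h
      _ = (k : ENNReal)⁻¹ * ∑ i, x i * x i := hR
  exact (ENNReal.mul_le_mul_iff_right (ENNReal.inv_ne_zero.mpr hkt) (ENNReal.inv_ne_top.mpr hk0)).mp key

/-- Let `(S, d)` be a compact metric space and `μ` a Borel probability
measure on `S`, and let `θ` be the distance distribution of `(S, d, μ)` (the pushforward of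
`μ ⊗ μ` under `(x, y) ↦ dist x y`). For every `ε > 0`, if `S` can be covered by `k` balls of
radius `ε / 2` (for some positive integer `k`), then `θ [0, ε] ≥ 1 / k`. -/
theorem distance_distribution_ge_inv_covering_number
    {S : Type*} [MetricSpace S] [CompactSpace S] [MeasurableSpace S] [BorelSpace S]
    (μ : Measure S) [IsProbabilityMeasure μ] (ε : ℝ) (hε : 0 < ε)
    (k : ℕ) (hk : 0 < k) (c : Fin k → S)
    (hcover : Set.univ ⊆ ⋃ i, Metric.ball (c i) (ε / 2)) :
    (k : ENNReal)⁻¹ ≤ ((μ.prod μ).map (fun p : S × S => dist p.1 p.2)) (Set.Icc 0 ε) := by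
  classical
  set B : Fin k → Set S := fun i => Metric.ball (c i) (ε / 2) with hB
  set A : Fin k → Set S := fun i => B i \ ⋃ j, ⋃ (_ : j < i), B j with hA
  have hAmeas : ∀ i, MeasurableSet (A i) := fun i =>
    (Metric.isOpen_ball.measurableSet).diff
      (MeasurableSet.iUnion fun j => MeasurableSet.iUnion fun _ =>
        Metric.isOpen_ball.measurableSet)
  have hAsub : ∀ i, A i ⊆ B i := fun i => Set.diff_subset
  have hkey : ∀ i j : Fin k, i < j → Disjoint (A i) (A j) := by
    intro i j hlt
    refine Set.disjoint_left.mpr fun x hxi hxj => ?_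
    exact hxj.2 (Set.mem_iUnion.mpr ⟨i, Set.mem_iUnion.mpr ⟨hlt, hAsub i hxi⟩⟩)
  have hAdisj : Pairwise (Function.onFun Disjoint A) := by
    intro i j hij
    rcases hij.lt_or_gt with h | h
    · exact hkey i j h
    · exact (hkey j i h).symm
  have hAcover : (⋃ i, B i) ⊆ ⋃ i, A i := by
    intro x hx
    obtain ⟨i, hi⟩ := Set.mem_iUnion.mp hx
    set T : Finset (Fin k) := Finset.univ.filter (fun j => x ∈ B j) with hT
    have hTne : T.Nonempty := ⟨i, by simp [hT, hi]⟩
    set i₀ := T.min' hTne with hi₀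
    refine Set.mem_iUnion.mpr ⟨i₀, ?_, ?_⟩
    · have : i₀ ∈ T := T.min'_mem hTne
      simpa [hT] using this
    · intro hmem
      obtain ⟨j, hj⟩ := Set.mem_iUnion.mp hmem
      obtain ⟨hjlt, hxj⟩ := Set.mem_iUnion.mp hj
      exact absurd (T.min'_le j (by simp [hT, hxj])) (not_le.mpr hjlt)
  -- the sum of the measures of the `A i` is at least 1
  have hsum : 1 ≤ ∑ i, μ (A i) := by
    have h1 : (1 : ENNReal) = μ Set.univ := (measure_univ).symm
    calc (1 : ENNReal) = μ Set.univ := h1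
      _ ≤ μ (⋃ i, A i) := measure_mono (hcover.trans hAcover)
      _ ≤ ∑ i, μ (A i) := by
          simpa using measure_iUnion_fintype_le μ A
  -- each product `A i ×ˢ A i` is contained in the preimage of `[0, ε]`
  have hprodsub : ∀ i, A i ×ˢ A i ⊆ (fun p : S × S => dist p.1 p.2) ⁻¹' Set.Icc 0 ε := by
    intro i p hp
    refine ⟨dist_nonneg, ?_⟩
    have h1 : dist p.1 (c i) < ε / 2 := hAsub i hp.1
    have h2 : dist p.2 (c i) < ε / 2 := hAsub i hp.2
    calc dist p.1 p.2 ≤ dist p.1 (c i) + dist (c i) p.2 := dist_triangle _ _ _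
      _ ≤ ε / 2 + ε / 2 := by rw [dist_comm (c i)]; exact add_le_add h1.le h2.le
      _ = ε := by ring
  have hmeas : Measurable (fun p : S × S => dist p.1 p.2) :=
    (continuous_dist.comp (continuous_fst.prodMk continuous_snd)).measurable
  rw [Measure.map_apply hmeas measurableSet_Icc]
  calc (k : ENNReal)⁻¹ ≤ ∑ i, μ (A i) * μ (A i) := inv_le_sum_sq hk _ hsum
    _ = ∑ i, (μ.prod μ) (A i ×ˢ A i) := by
        refine Finset.sum_congr rfl fun i _ => ?_
        rw [Measure.prod_prod]
    _ = (μ.prod μ) (⋃ i, A i ×ˢ A i) := by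
        rw [measure_iUnion (fun i j hij => Set.Disjoint.set_prod_left (hAdisj hij) _ _)
          fun i => (hAmeas i).prod (hAmeas i), tsum_fintype]
    _ ≤ (μ.prod μ) ((fun p : S × S => dist p.1 p.2) ⁻¹' Set.Icc 0 ε) := by
        exact measure_mono (Set.iUnion_subset hprodsub)
end

section
/- For every non-decreasing function F : (0,∞) → (0,1], there exist a compact metric space (S,d), a Borel probability measure μ on S, and ε₀ > 0 such that the distance distribution θ of (S,d,μ) satisfies θ([0,ε]) ≤ F(ε) for all ε ∈ (0, ε₀]. -/
/-!
Take `S = Π n, Fin bₙ` with the ultrametric `2^{-k}`, `k` the first coordinate where two points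
differ, and the product of the uniform measures. Two points at distance `< 2^{-n}` agree in
coordinate `n`, which for independent points happens with probability `1 / bₙ`. Choosing
`bₙ > 1 / F(2^{-(n+2)})` makes this at most `F ε` whenever `2^{-(n+2)} < ε ≤ 2^{-(n+1)}`.
-/

open MeasureTheory
open scoped ENNReal

theorem MeasureTheory.Measure.prod_setOf_comp_eq_le {α β : Type*} [MeasurableSpace α]
    [MeasurableSpace β] [MeasurableEq β] (μ ν : Measure α) [IsProbabilityMeasure μ] [SFinite ν]
    {f : α → β} (hf : Measurable f) {c : ℝ≥0∞} (hc : ∀ b, ν.map f {b} ≤ c) :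
    μ.prod ν {p | f p.1 = f p.2} ≤ c := by
  have hS : MeasurableSet {p : α × α | f p.1 = f p.2} :=
    measurableSet_eq_fun (by fun_prop) (by fun_prop)
  have hslice (x : α) : Prod.mk x ⁻¹' {p | f p.1 = f p.2} = f ⁻¹' {f x} := by
    ext; simp [eq_comm]
  rw [Measure.prod_apply hS]
  calc ∫⁻ x, ν (Prod.mk x ⁻¹' {p | f p.1 = f p.2}) ∂μ ≤ ∫⁻ _, c ∂μ := by
        refine lintegral_mono fun x => ?_
        rw [hslice, ← Measure.map_apply hf (measurableSet_singleton (f x))]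
        exact hc (f x)
    _ = c := by simp

theorem MeasureTheory.Measure.infinitePi_prod_setOf_eq_le {ι : Type*} {E : ι → Type*}
    [∀ i, MeasurableSpace (E i)] (ν : ∀ i, Measure (E i)) [∀ i, IsProbabilityMeasure (ν i)]
    {i : ι} [MeasurableEq (E i)] {c : ℝ≥0∞} (hc : ∀ a, ν i {a} ≤ c) :
    (infinitePi ν).prod (infinitePi ν) {p | p.1 i = p.2 i} ≤ c :=
  prod_setOf_comp_eq_le _ _ (measurable_pi_apply i) fun a => by
    simpa only [infinitePi_map_eval] using hc a

theorem exists_pow_half_lt_le {ε : ℝ} (hε : 0 < ε) (hε₀ : ε ≤ 1 / 2) :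
    ∃ n : ℕ, (1 / 2 : ℝ) ^ (n + 2) < ε ∧ ε ≤ (1 / 2) ^ (n + 1) := by
  obtain ⟨n, hlt, hle⟩ := exists_nat_pow_near_of_lt_one (x := 2 * ε) (by positivity) (by linarith)
    (by norm_num : (0 : ℝ) < 1 / 2) (by norm_num)
  refine ⟨n, ?_, ?_⟩ <;> rw [pow_succ] <;> linarith

theorem exists_compact_space_distance_distribution_le_general
    (F : ℝ → ℝ)
    (hF_mono : ∀ ⦃x y : ℝ⦄, 0 < x → x ≤ y → F x ≤ F y)
    (hF_pos : ∀ x : ℝ, 0 < x → 0 < F x) :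
    ∃ (S : Type) (_ : MetricSpace S) (_ : MeasurableSpace S) (_ : BorelSpace S)
      (μ : Measure S) (_ : IsProbabilityMeasure μ),
      CompactSpace S ∧
      ∃ ε₀ : ℝ, 0 < ε₀ ∧ ∀ ε : ℝ, 0 < ε → ε ≤ ε₀ →
        ((μ.prod μ).map (fun p : S × S => dist p.1 p.2)) (Set.Icc 0 ε)
          ≤ ENNReal.ofReal (F ε) := by
  set b : ℕ → ℕ := fun n => ⌊(F ((1 / 2) ^ (n + 2)))⁻¹⌋₊ + 1
  let _ : MetricSpace (∀ n, Fin (b n)) := PiNat.metricSpace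
  set μ : Measure (∀ n, Fin (b n)) :=
    Measure.infinitePi fun n => (PMF.uniformOfFintype (Fin (b n))).toMeasure
  refine ⟨∀ n, Fin (b n), inferInstance, inferInstance, inferInstance, μ, inferInstance,
    inferInstance, 1 / 2, by norm_num, fun ε hε hε₀ => ?_⟩
  obtain ⟨n, hnε, hεn⟩ := exists_pow_half_lt_le hε hε₀
  have hclose : (fun p : (∀ n, Fin (b n)) × (∀ n, Fin (b n)) => dist p.1 p.2) ⁻¹' Set.Icc 0 ε
      ⊆ {p | p.1 n = p.2 n} :=
    fun p hp => PiNat.apply_eq_of_dist_lt (hp.2.trans_lt <| hεn.trans_lt <|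
      pow_lt_pow_right_of_lt_one₀ (by norm_num) (by norm_num) n.lt_succ_self) le_rfl
  have hcard : (b n : ℝ)⁻¹ ≤ F ε := by
    have hFn := hF_pos _ (pow_pos (by norm_num : (0 : ℝ) < 1 / 2) (n + 2))
    refine (inv_le_of_inv_le₀ hFn ?_).trans (hF_mono (by positivity) hnε.le)
    exact_mod_cast (Nat.lt_floor_add_one _).le
  calc ((μ.prod μ).map (fun p => dist p.1 p.2)) (Set.Icc 0 ε)
      ≤ μ.prod μ {p | p.1 n = p.2 n} := by
        rw [Measure.map_apply measurable_dist measurableSet_Icc]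
        exact measure_mono hclose
    _ ≤ (b n : ℝ≥0∞)⁻¹ := Measure.infinitePi_prod_setOf_eq_le _ fun a => by
        rw [PMF.toMeasure_apply_singleton _ _ (measurableSet_singleton a),
          PMF.uniformOfFintype_apply, Fintype.card_fin]
    _ ≤ ENNReal.ofReal (F ε) := by
        rw [← ENNReal.ofReal_natCast, ← ENNReal.ofReal_inv_of_pos (by positivity)]
        exact ENNReal.ofReal_le_ofReal hcard

/-- For every non-decreasing function `F : (0, ∞) → (0, 1]`, there exist a
compact metric space `(S, d)`, a Borel probability measure `μ` on `S`, and `ε₀ > 0` such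
that the distance distribution `θ` of `(S, d, μ)` (the pushforward of `μ ⊗ μ` under
`(x, y) ↦ dist x y`) satisfies `θ [0, ε] ≤ F ε` for all `ε ∈ (0, ε₀]`. -/
theorem exists_compact_space_distance_distribution_le
    (F : ℝ → ℝ)
    (hF_mono : ∀ ⦃x y : ℝ⦄, 0 < x → x ≤ y → F x ≤ F y)
    (hF_pos : ∀ x : ℝ, 0 < x → 0 < F x)
    (hF_le_one : ∀ x : ℝ, 0 < x → F x ≤ 1) :
    ∃ (S : Type) (_ : MetricSpace S) (_ : MeasurableSpace S) (_ : BorelSpace S)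
      (μ : Measure S) (_ : IsProbabilityMeasure μ),
      CompactSpace S ∧
      ∃ ε₀ : ℝ, 0 < ε₀ ∧ ∀ ε : ℝ, 0 < ε → ε ≤ ε₀ →
        ((μ.prod μ).map (fun p : S × S => dist p.1 p.2)) (Set.Icc 0 ε)
          ≤ ENNReal.ofReal (F ε) :=
  exists_compact_space_distance_distribution_le_general F hF_mono hF_pos
end

section
/- Let k ∈ ℕ, let 0 = d₀ < d₁ < ⋯ < d_k be real numbers, and let p₀, p₁, …, p_k ∈ (0,1) with p₀ + p₁ + ⋯ + p_k = 1. Then there exist a compact metric space (S,d) and a Borel probability measure μ on S whose distance distribution equals θ = p₀·δ₀ + p₁·δ_{d₁} + ⋯ + p_k·δ_{d_k}. -/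
/-!
The space is a finite ultrametric space, built by induction on `k`. Take a space realising the
renormalised distribution `p₀ / t, …, p_{k-1} / t` with `t = 1 - p_k`, and weights
`v₁, …, vₙ > 0` with `∑ vᵢ = 1` and `∑ vᵢ² = t` (they exist for every `t ∈ (0, 1)`). Glue `n`
copies of the space, the measure on the `i`-th scaled by `vᵢ`, at mutual distance `d_k`: a
random pair lands in the same copy with probability `∑ vᵢ² = t`, and then has the old distance
distribution, and otherwise is at distance `d_k`, which exceeds all old distances, so the result
is again an ultrametric.

The construction only uses the order of the distances, so it is carried out for ultrametrics
with values in `Fin (k + 1)` ("levels"); the metric is `d ∘ level`.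
-/

open MeasureTheory Finset

theorem exists_pos_sum_eq_one_sum_sq_eq {t : ℝ} (ht : t ∈ Set.Ioo 0 1) :
    ∃ (n : ℕ) (v : Fin n → ℝ), (∀ i, 0 < v i) ∧ ∑ i, v i = 1 ∧ ∑ i, v i ^ 2 = t := by
  obtain ⟨ht0, ht1⟩ := ht
  obtain ⟨m, hm⟩ := exists_nat_one_div_lt ht0
  -- one weight `a` and `m + 1` equal weights `(1 - a) / (m + 1)`, with `a` chosen by the IVT
  set f : ℝ → ℝ := fun a => a ^ 2 + (1 - a) ^ 2 / (m + 1)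
  have hf_left : f (1 / (m + 2)) = 1 / (m + 2) := by
    simp only [f]; field_simp; ring
  have hf_right : f 1 = 1 := by simp [f]
  have ht_mem : t ∈ Set.Icc (f (1 / (m + 2))) (f 1) := by
    rw [hf_left, hf_right]
    refine ⟨le_trans ?_ hm.le, ht1.le⟩
    gcongr; linarith
  obtain ⟨a, ha, hfa⟩ := intermediate_value_Icc (by rw [div_le_one] <;> linarith)
    (by fun_prop : Continuous f).continuousOn ht_mem
  have ha0 : 0 < a := lt_of_lt_of_le (by positivity) ha.1
  have ha1 : a < 1 := lt_of_le_of_ne ha.2 (by rintro rfl; linarith [hf_right])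
  have hb0 : 0 < (1 - a) / (m + 1) := div_pos (by linarith) (by positivity)
  refine ⟨m + 2, Fin.cons a fun _ => (1 - a) / (m + 1), Fin.cases ha0 fun _ => hb0, ?_, ?_⟩
  · simp only [Fin.sum_univ_succ, Fin.cons_zero, Fin.cons_succ, sum_const, card_univ,
      Fintype.card_fin, nsmul_eq_mul, Nat.cast_add, Nat.cast_one]
    field_simp
    ring
  · simp only [Fin.sum_univ_succ, Fin.cons_zero, Fin.cons_succ, sum_const, card_univ,
      Fintype.card_fin, nsmul_eq_mul, Nat.cast_add, Nat.cast_one, ← hfa, add_right_inj, f]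
    field_simp

structure LevelUltrametric (S α : Type*) [LinearOrder α] [OrderBot α] where
  level : S → S → α
  level_comm : ∀ x y, level x y = level y x
  level_eq_bot_iff : ∀ {x y}, level x y = ⊥ ↔ x = y
  level_le_max : ∀ x y z, level x z ≤ max (level x y) (level y z)

namespace LevelUltrametric

variable {S α β : Type*} [LinearOrder α] [OrderBot α] [LinearOrder β] [OrderBot β]

def map (U : LevelUltrametric S α) (f : α → β) (hf : StrictMono f) (hf_bot : f ⊥ = ⊥) :
    LevelUltrametric S β where
  level x y := f (U.level x y)
  level_comm x y := by rw [U.level_comm]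
  level_eq_bot_iff {x y} := by rw [← hf_bot, hf.injective.eq_iff, U.level_eq_bot_iff]
  level_le_max x y z := hf.monotone.map_max ▸ hf.monotone (U.level_le_max x y z)

def glue (U : LevelUltrametric S α) (ι : Type*) [DecidableEq ι] (L : α)
    (hL : ∀ x y, U.level x y < L) : LevelUltrametric (ι × S) α where
  level a b := if a.1 = b.1 then U.level a.2 b.2 else L
  level_comm a b := by
    by_cases h : a.1 = b.1
    · rw [if_pos h, if_pos h.symm, U.level_comm]
    · rw [if_neg h, if_neg (Ne.symm h)]
  level_eq_bot_iff {a b} := by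
    by_cases h : a.1 = b.1
    · rw [if_pos h, U.level_eq_bot_iff, Prod.ext_iff, and_iff_right h]
    · rw [if_neg h]
      exact iff_of_false (bot_le.trans_lt (hL a.2 a.2)).ne' fun hab => h (congrArg Prod.fst hab)
  level_le_max a b c := by
    have hac : (if a.1 = c.1 then U.level a.2 c.2 else L) ≤ L := by
      split_ifs
      exacts [(hL _ _).le, le_rfl]
    by_cases hbc : b.1 = c.1
    · by_cases hab : a.1 = b.1
      · simp only [if_pos hab, if_pos hbc, if_pos (hab.trans hbc), U.level_le_max]
      · rw [if_neg hab]
        exact le_max_of_le_left hac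
    · rw [if_neg hbc]
      exact le_max_of_le_right hac

variable [Fintype S]

def levelMass (U : LevelUltrametric S α) (w : S → ℝ) (a : α) : ℝ :=
  ∑ q : S × S with U.level q.1 q.2 = a, w q.1 * w q.2

theorem levelMass_map (U : LevelUltrametric S α) {f : α → β} (hf : StrictMono f)
    (hf_bot : f ⊥ = ⊥) (w : S → ℝ) (a : α) :
    (U.map f hf hf_bot).levelMass w (f a) = U.levelMass w a := by
  simp only [levelMass, map, hf.injective.eq_iff]

theorem levelMass_of_forall_ne (U : LevelUltrametric S α) (w : S → ℝ) {a : α}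
    (ha : ∀ x y, U.level x y ≠ a) : U.levelMass w a = 0 :=
  sum_eq_zero fun q hq => absurd (mem_filter.1 hq).2 (ha q.1 q.2)

theorem levelMass_eq_sum_sum (U : LevelUltrametric S α) (w : S → ℝ) (a : α) :
    U.levelMass w a = ∑ x, ∑ y, if U.level x y = a then w x * w y else 0 := by
  rw [levelMass, sum_filter, Fintype.sum_prod_type]

theorem levelMass_glue {ι : Type*} [Fintype ι] [DecidableEq ι] (U : LevelUltrametric S α)
    (L : α) (hL : ∀ x y, U.level x y < L) (v : ι → ℝ) (w : S → ℝ) (a : α) :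
    (U.glue ι L hL).levelMass (fun q => v q.1 * w q.2) a =
      (∑ i, v i ^ 2) * U.levelMass w a +
        if a = L then ((∑ i, v i) ^ 2 - ∑ i, v i ^ 2) * (∑ x, w x) ^ 2 else 0 := by
  set M := U.levelMass w a
  set c := if a = L then (∑ x, w x) ^ 2 else 0
  have hcopies : ∀ i j, ∑ x, ∑ y, (if (if i = j then U.level x y else L) = a
      then v i * w x * (v j * w y) else 0) =
        v i * v j * (c + if i = j then M - c else 0) := by
    intro i j
    by_cases hij : i = j
    · simp only [if_pos hij, add_sub_cancel, M, levelMass_eq_sum_sum, mul_sum, mul_ite, mul_zero]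
      refine sum_congr rfl fun x _ => sum_congr rfl fun y _ => ?_
      split_ifs <;> ring
    · by_cases haL : a = L
      · simp only [if_neg hij, haL, c, if_true, add_zero]
        rw [sq, sum_mul_sum, mul_sum]
        refine sum_congr rfl fun x _ => ?_
        rw [mul_sum]
        exact sum_congr rfl fun y _ => by ring
      · simp only [if_neg hij, Ne.symm haL, c, haL, if_false, sum_const_zero, add_zero, mul_zero]
  have hsq : ∑ i, ∑ j, v i * v j = (∑ i, v i) ^ 2 := by rw [sq, sum_mul_sum]
  calc _ = ∑ i, ∑ j, ∑ x, ∑ y, (if (if i = j then U.level x y else L) = a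
        then v i * w x * (v j * w y) else 0) := by
        simp only [levelMass_eq_sum_sum, glue, Fintype.sum_prod_type]
        exact sum_congr rfl fun i _ => sum_comm
    _ = (∑ i, ∑ j, v i * v j) * c + ∑ i, v i * v i * (M - c) := by
        simp only [hcopies, mul_add, sum_add_distrib, sum_mul, mul_ite, mul_zero, sum_ite_eq,
          mem_univ, if_true]
    _ = _ := by
        rw [hsq, ← sum_mul]
        simp only [c, ← sq]
        split_ifs <;> ring

abbrev toMetricSpace (U : LevelUltrametric S α) (d : α → ℝ) (hd_bot : d ⊥ = 0)
    (hd : StrictMono d) : MetricSpace S where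
  dist x y := d (U.level x y)
  dist_self x := by rw [U.level_eq_bot_iff.2 rfl, hd_bot]
  dist_comm x y := by rw [U.level_comm]
  dist_triangle x y z := by
    have hd_nonneg : ∀ a, 0 ≤ d a := fun a => hd_bot ▸ hd.monotone bot_le
    calc d (U.level x z) ≤ d (max (U.level x y) (U.level y z)) :=
          hd.monotone (U.level_le_max x y z)
      _ = max (d (U.level x y)) (d (U.level y z)) := hd.monotone.map_max
      _ ≤ d (U.level x y) + d (U.level y z) := max_le_add_of_nonneg (hd_nonneg _) (hd_nonneg _)
  eq_of_dist_eq_zero h := U.level_eq_bot_iff.1 (hd.injective (h.trans hd_bot.symm))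

end LevelUltrametric

def IsLevelDistribution {α : Type*} [LinearOrder α] [OrderBot α] (p : α → ℝ) : Prop :=
  ∃ (S : Type) (_ : Fintype S) (U : LevelUltrametric S α) (w : S → ℝ),
    (∀ x, 0 ≤ w x) ∧ ∑ x, w x = 1 ∧ ∀ a, U.levelMass w a = p a

theorem isLevelDistribution_fin_one {p : Fin 1 → ℝ} (hp : ∑ i, p i = 1) :
    IsLevelDistribution p := by
  refine ⟨Unit, inferInstance, ⟨fun _ _ => ⊥, fun _ _ => rfl, by simp, fun _ _ _ => bot_le⟩,
    fun _ => 1, fun _ => zero_le_one, by simp, fun a => ?_⟩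
  have hp0 : p 0 = 1 := by simpa using hp
  simp [LevelUltrametric.levelMass, Fin.fin_one_eq_zero a, hp0, bot_eq_zero]

theorem IsLevelDistribution.of_castSucc {k : ℕ} {p : Fin (k + 2) → ℝ} (hp : ∀ i, 0 < p i)
    (hp_sum : ∑ i, p i = 1)
    (h : IsLevelDistribution fun i : Fin (k + 1) =>
      p i.castSucc / ∑ j : Fin (k + 1), p j.castSucc) :
    IsLevelDistribution p := by
  set t := ∑ j : Fin (k + 1), p j.castSucc
  have ht : t = 1 - p (Fin.last _) := by rw [← hp_sum, Fin.sum_univ_castSucc]; ring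
  have ht0 : 0 < t := sum_pos (fun i _ => hp _) univ_nonempty
  obtain ⟨S, _, U, w, hw0, hw1, hU⟩ := h
  obtain ⟨n, v, hv0, hv1, hv2⟩ := exists_pos_sum_eq_one_sum_sq_eq
    ⟨ht0, by linarith [hp (Fin.last _)]⟩
  set U' := U.map Fin.castSucc Fin.strictMono_castSucc (by simp [bot_eq_zero]) with hU'
  have hlast : ∀ x y, U'.level x y < Fin.last _ := fun _ _ => Fin.castSucc_lt_last _
  refine ⟨Fin n × S, inferInstance, U'.glue (Fin n) _ hlast, fun q => v q.1 * w q.2,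
    fun q => mul_nonneg (hv0 _).le (hw0 _), ?_, fun a => ?_⟩
  · rw [Fintype.sum_prod_type, ← hv1]
    simp only [← mul_sum, hw1, mul_one]
  rw [LevelUltrametric.levelMass_glue, hv1, hv2, hw1]
  induction a using Fin.lastCases with
  | last =>
    rw [U'.levelMass_of_forall_ne w fun x y => (hlast x y).ne, if_pos rfl, ht]
    ring
  | cast i =>
    rw [hU', U.levelMass_map, hU, if_neg (Fin.castSucc_lt_last i).ne, add_zero]
    field_simp

theorem isLevelDistribution_of_pos (k : ℕ) {p : Fin (k + 1) → ℝ} (hp : ∀ i, 0 < p i)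
    (hp_sum : ∑ i, p i = 1) : IsLevelDistribution p := by
  induction k with
  | zero => exact isLevelDistribution_fin_one hp_sum
  | succ k ih =>
    have ht0 : 0 < ∑ j : Fin (k + 1), p j.castSucc := sum_pos (fun i _ => hp _) univ_nonempty
    refine IsLevelDistribution.of_castSucc hp hp_sum (ih (fun i => div_pos (hp _) ht0) ?_)
    rw [← sum_div, div_self ht0.ne']

theorem MeasureTheory.Measure.map_eq_sum_smul_dirac {α β : Type*} [Fintype α]
    [MeasurableSpace α] [MeasurableSingletonClass α] [MeasurableSpace β] (μ : Measure α)
    (f : α → β) :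
    μ.map f = ∑ a, μ {a} • dirac (f a) := by
  conv_lhs => rw [← μ.sum_smul_dirac]
  rw [Measure.map_sum (measurable_of_countable f).aemeasurable, Measure.sum_fintype]
  simp only [Measure.map_smul, Measure.map_dirac' (measurable_of_countable f)]

section WeightedDiracSum

variable {S : Type*} [Fintype S] [MeasurableSpace S]

noncomputable def weightedDiracSum (w : S → ℝ) : Measure S :=
  ∑ x, ENNReal.ofReal (w x) • Measure.dirac x

theorem weightedDiracSum_singleton [MeasurableSingletonClass S] (w : S → ℝ) (a : S) :
    weightedDiracSum w {a} = ENNReal.ofReal (w a) := by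
  classical
  simp [weightedDiracSum, Set.indicator]

theorem isProbabilityMeasure_weightedDiracSum {w : S → ℝ} (hw : ∀ x, 0 ≤ w x)
    (hw_sum : ∑ x, w x = 1) :
    IsProbabilityMeasure (weightedDiracSum w) := by
  constructor
  simp [weightedDiracSum, ← ENNReal.ofReal_sum_of_nonneg fun x _ => hw x, hw_sum]

theorem LevelUltrametric.map_prod_weightedDiracSum [MeasurableSingletonClass S]
    {α : Type*} [LinearOrder α] [OrderBot α] [Fintype α] (U : LevelUltrametric S α)
    {w : S → ℝ} (hw : ∀ x, 0 ≤ w x) (d : α → ℝ) :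
    ((weightedDiracSum w).prod (weightedDiracSum w)).map (fun q => d (U.level q.1 q.2)) =
      ∑ a, ENNReal.ofReal (U.levelMass w a) • Measure.dirac (d a) := by
  rw [Measure.map_eq_sum_smul_dirac, ← sum_fiberwise univ fun q : S × S => U.level q.1 q.2]
  refine sum_congr rfl fun a _ => ?_
  rw [LevelUltrametric.levelMass,
    ENNReal.ofReal_sum_of_nonneg fun q _ => mul_nonneg (hw _) (hw _), sum_smul]
  refine sum_congr rfl fun q hq => ?_
  rw [(mem_filter.1 hq).2, ← Set.singleton_prod_singleton, Measure.prod_prod,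
    weightedDiracSum_singleton, weightedDiracSum_singleton, ENNReal.ofReal_mul (hw _)]

end WeightedDiracSum

/-- Theorem 1 of the paper. Let `k ∈ ℕ`, let `0 = d₀ < d₁ < ⋯ < d_k` be
real numbers, and let `p₀, …, p_k ∈ (0, 1)` with `p₀ + ⋯ + p_k = 1`. Then there exist a
compact metric space `(S, d)` and a Borel probability measure `μ` on `S` whose distance
distribution (the pushforward of `μ ⊗ μ` under `(x, y) ↦ dist x y`) equals
`θ = p₀ • δ₀ + p₁ • δ_{d₁} + ⋯ + p_k • δ_{d_k}`. -/
theorem finitely_supported_distribution_is_feasible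
    (k : ℕ) (d : Fin (k + 1) → ℝ) (hd0 : d 0 = 0) (hd_mono : StrictMono d)
    (p : Fin (k + 1) → ℝ) (hp : ∀ i, p i ∈ Set.Ioo (0 : ℝ) 1) (hp_sum : ∑ i, p i = 1) :
    ∃ (S : Type) (_ : MetricSpace S) (_ : MeasurableSpace S) (_ : BorelSpace S)
      (μ : Measure S) (_ : IsProbabilityMeasure μ),
      CompactSpace S ∧
      (μ.prod μ).map (fun q : S × S => dist q.1 q.2)
        = ∑ i, ENNReal.ofReal (p i) • Measure.dirac (d i) := by
  obtain ⟨S, _, U, w, hw0, hw_sum, hU⟩ :=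
    isLevelDistribution_of_pos k (fun i => (hp i).1) hp_sum
  let _ : MetricSpace S := U.toMetricSpace d (by rwa [bot_eq_zero]) hd_mono
  let _ : MeasurableSpace S := ⊤
  have _ : BorelSpace S := ⟨borel_eq_top_of_discrete.symm⟩
  refine ⟨S, inferInstance, inferInstance, inferInstance, weightedDiracSum w,
    isProbabilityMeasure_weightedDiracSum hw0 hw_sum, Finite.compactSpace, ?_⟩
  simp only [← hU]
  exact U.map_prod_weightedDiracSum hw0 d
end

section
/- Let k ∈ ℕ, let 0 = d₀ < d₁ < ⋯ < d_k be real numbers, and let p₀, p₁, …, p_k ∈ (0,1) with p₀ + p₁ + ⋯ + p_k = 1. Then there exist a compact metric space (S,d), a Borel probability measure μ on S, and a point ρ ∈ S such that the distance distribution of (S,d,μ) equals θ = p₀·δ₀ + p₁·δ_{d₁} + ⋯ + p_k·δ_{d_k}, and d(ρ, s) = d_k/2 for every point s in the support of μ. -/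
/-!
Put finitely many atoms with weights `w a` and levels `ℓ a ∈ {0, …, k}` at the points
`d (ℓ a) • e a` of `ℓ^∞`. Distinct atoms are then at distance `max (d (ℓ a)) (d (ℓ b))`, and the
constant point `d_k / 2` is at distance exactly `d_k / 2` from every atom (an extra coordinate on
which all atoms vanish makes this exact). So it suffices to choose weights such that the pairs
`(a, b)` with `pairLevel = i` carry mass `p i`, where the pair level is `0` on the diagonal and
`max (ℓ a) (ℓ b)` off it.

Such weights are built by induction on `k`: scale a configuration for the lower levels by `t`
and add new top-level atoms of total weight `1 - t` and sum of squares `s`. They add `s` to the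
diagonal mass `p₀` and give the top level mass `1 - t² - s`. A small `s` is realised as
`x² + n y²` with `x + n y = 1 - t` by taking `n` large.
-/

open MeasureTheory

section FiniteSums

variable {κ : Type*} [Fintype κ] [DecidableEq κ]

lemma dist_pi_single_of_ne {i j : κ} (hij : i ≠ j) (x y : ℝ) :
    dist (Pi.single i x : κ → ℝ) (Pi.single j y) = max |x| |y| := by
  refine le_antisymm ((dist_pi_le_iff (by positivity)).2 fun c => ?_) (max_le ?_ ?_)
  · by_cases hci : c = i
    · subst hci; simp [hij]
    · by_cases hcj : c = j
      · subst hcj; simp [hci, Real.dist_eq]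
      · simp [hci, hcj]
  · simpa [Pi.single_apply, hij, Real.dist_eq] using
      dist_le_pi_dist (Pi.single i x : κ → ℝ) (Pi.single j y) i
  · simpa [Pi.single_apply, hij.symm, Real.dist_eq] using
      dist_le_pi_dist (Pi.single i x : κ → ℝ) (Pi.single j y) j

lemma dist_const_pi_single {r x : ℝ} (hx₀ : 0 ≤ x) (hx : x ≤ 2 * r) {i j : κ} (hji : j ≠ i) :
    dist (fun _ => r : κ → ℝ) (Pi.single i x) = r := by
  have hr : 0 ≤ r := by linarith
  refine le_antisymm ((dist_pi_le_iff hr).2 fun c => ?_) ?_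
  · by_cases hci : c = i
    · subst hci
      simp only [Pi.single_eq_same, Real.dist_eq]
      exact abs_le.2 ⟨by linarith, by linarith⟩
    · simp [hci, abs_of_nonneg hr]
  · simpa [Pi.single_apply, hji, Real.dist_eq, abs_of_nonneg hr] using
      dist_le_pi_dist (fun _ => r : κ → ℝ) (Pi.single i x) j

lemma sum_sum_ite_eq_zero_mul (v : κ → ℝ) :
    ∑ j, ∑ j', (if j = j' then 0 else v j * v j') = (∑ j, v j) ^ 2 - ∑ j, v j ^ 2 := by
  have h (j j' : κ) : (if j = j' then 0 else v j * v j')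
      = v j * v j' - if j = j' then v j * v j' else 0 := by
    split_ifs <;> simp
  simp_rw [h, Finset.sum_sub_distrib, Finset.sum_ite_eq, Finset.mem_univ, if_true, sq,
    Finset.sum_mul_sum]

end FiniteSums

lemma MeasureTheory.Measure.map_prod_sum_smul_dirac {α β ι : Type*} [MeasurableSpace α]
    [MeasurableSpace β] [Fintype ι] (c : ι → ENNReal) (x : ι → α) {f : α × α → β}
    (hf : Measurable f) :
    ((∑ a, c a • Measure.dirac (x a)).prod (∑ b, c b • Measure.dirac (x b))).map f
      = ∑ a, ∑ b, (c a * c b) • Measure.dirac (f (x a, x b)) := by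
  simp_rw [← Measure.sum_fintype, Measure.prod_sum, Measure.sum_fintype, Fintype.sum_prod_type,
    Measure.prod_smul_left, Measure.prod_smul_right, Measure.dirac_prod_dirac,
    Measure.map_finset_sum' hf.aemeasurable, Measure.map_smul, Measure.map_dirac' hf, smul_smul]

lemma mem_range_of_forall_measure_ball_pos {X ι : Type*} [MetricSpace X] [MeasurableSpace X]
    [BorelSpace X] [Fintype ι] (c : ι → ENNReal) (x : ι → X) {s : X}
    (hs : ∀ r : ℝ, 0 < r → 0 < (∑ a, c a • Measure.dirac (x a)) (Metric.ball s r)) :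
    s ∈ Set.range x := by
  by_contra hsx
  obtain ⟨r, hr, hball⟩ :=
    Metric.isOpen_iff.1 (Set.finite_range x).isClosed.isOpen_compl s hsx
  refine (hs r hr).ne' ?_
  rw [Measure.finsetSum_apply]
  refine Finset.sum_eq_zero fun a _ => ?_
  rw [Measure.smul_apply, Measure.dirac_apply' _ Metric.isOpen_ball.measurableSet,
    Set.indicator_of_notMem fun ha => hball ha ⟨a, rfl⟩, smul_zero]

lemma exists_nonneg_add_mul_eq_sq_add_mul_sq_eq {n m s : ℝ} (hn : 0 < n) (hm : 0 ≤ m)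
    (hs : m ^ 2 ≤ (n + 1) * s) (hsm : s ≤ m ^ 2) :
    ∃ x y : ℝ, 0 ≤ x ∧ 0 ≤ y ∧ x + n * y = m ∧ x ^ 2 + n * y ^ 2 = s := by
  set c := √(n * ((n + 1) * s - m ^ 2))
  have hc : c ^ 2 = n * ((n + 1) * s - m ^ 2) := Real.sq_sqrt (by nlinarith)
  have hcm : c ≤ n * m := by
    refine abs_le_of_sq_le_sq' ?_ (by positivity) |>.2
    nlinarith [mul_le_mul_of_nonneg_left hsm (by positivity : (0 : ℝ) ≤ n * (n + 1))]
  refine ⟨(m + c) / (n + 1), (m - c / n) / (n + 1), by positivity, ?_, ?_, ?_⟩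
  · refine div_nonneg (sub_nonneg.2 ((div_le_iff₀ hn).2 ?_)) (by positivity)
    linarith
  · field_simp
    ring
  · field_simp
    linear_combination (n + 1) * hc

lemma exists_fin_nonneg_sum_eq_sum_sq_eq {m s : ℝ} (hm : 0 ≤ m) (hs : 0 < s) (hsm : s ≤ m ^ 2) :
    ∃ (n : ℕ) (v : Fin n → ℝ), (∀ j, 0 ≤ v j) ∧ ∑ j, v j = m ∧ ∑ j, v j ^ 2 = s := by
  set n := ⌈m ^ 2 / s⌉₊
  have hn : 0 < (n : ℝ) := Nat.cast_pos.2 (Nat.ceil_pos.2 (div_pos (by linarith) hs))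
  have hns : m ^ 2 ≤ (n + 1) * s := by
    have := (div_le_iff₀ hs).1 (Nat.le_ceil (m ^ 2 / s))
    nlinarith
  obtain ⟨x, y, hx, hy, hsum, hsq⟩ := exists_nonneg_add_mul_eq_sq_add_mul_sq_eq hn hm hns hsm
  refine ⟨n + 1, Fin.cons x fun _ => y, fun j => Fin.cases hx (fun _ => hy) j, ?_, ?_⟩
  · simpa [Fin.sum_univ_succ] using hsum
  · simpa [Fin.sum_univ_succ] using hsq

-- `t` is the weight left on the lower levels, `s` the sum of squares of the new top-level weights.
lemma exists_top_split {p₀ p' : ℝ} (hp₀ : 0 < p₀) (hp' : 0 < p') (h : p₀ + p' ≤ 1) :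
    ∃ t s : ℝ, 0 < t ∧ t ≤ 1 ∧ 0 < s ∧ s < p₀ ∧ s ≤ (1 - t) ^ 2 ∧ t ^ 2 = 1 - p' - s := by
  have hs₀ : 0 < p₀ * p' ^ 2 / 4 := by positivity
  have hs : p₀ * p' ^ 2 / 4 < p₀ := by
    nlinarith [mul_lt_mul_of_pos_left (by nlinarith : p' ^ 2 < 4) hp₀]
  have hsp' : p₀ * p' ^ 2 / 4 ≤ p' ^ 2 / 4 := by nlinarith
  have ht₀ : 0 < 1 - p' - p₀ * p' ^ 2 / 4 := by linarith
  have ht : √(1 - p' - p₀ * p' ^ 2 / 4) ≤ 1 - p' / 2 :=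
    Real.sqrt_le_iff.2 ⟨by linarith, by linarith⟩
  refine ⟨_, _, Real.sqrt_pos.2 ht₀, by linarith, hs₀, hs, ?_, Real.sq_sqrt ht₀.le⟩
  nlinarith [mul_self_le_mul_self (by positivity : 0 ≤ p' / 2)
    (by linarith : p' / 2 ≤ 1 - √(1 - p' - p₀ * p' ^ 2 / 4))]

section LevelConfiguration

variable {ι κ : Type*} [DecidableEq ι] [DecidableEq κ] {k : ℕ}

def pairLevel (level : ι → Fin (k + 1)) (a b : ι) : Fin (k + 1) :=
  if a = b then 0 else max (level a) (level b)

def pairLevelMass [Fintype ι] (level : ι → Fin (k + 1)) (w : ι → ℝ) (i : Fin (k + 1)) : ℝ :=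
  ∑ a, ∑ b, if pairLevel level a b = i then w a * w b else 0

def addTopLevel (level : ι → Fin (k + 1)) : ι ⊕ κ → Fin (k + 2) :=
  Sum.elim (fun a => (level a).castSucc) fun _ => Fin.last (k + 1)

variable (level : ι → Fin (k + 1))

@[simp] lemma pairLevel_addTopLevel_inl_inl (a b : ι) :
    pairLevel (addTopLevel (κ := κ) level) (.inl a) (.inl b) = (pairLevel level a b).castSucc := by
  unfold pairLevel
  split_ifs <;> simp_all [addTopLevel, Fin.strictMono_castSucc.monotone.map_max]

@[simp] lemma pairLevel_addTopLevel_inl_inr (a : ι) (j : κ) :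
    pairLevel (addTopLevel level) (.inl a) (.inr j) = Fin.last (k + 1) := by
  simp [pairLevel, addTopLevel, (Fin.castSucc_lt_last _).le]

@[simp] lemma pairLevel_addTopLevel_inr_inl (j : κ) (a : ι) :
    pairLevel (addTopLevel level) (.inr j) (.inl a) = Fin.last (k + 1) := by
  simp [pairLevel, addTopLevel, (Fin.castSucc_lt_last _).le]

@[simp] lemma pairLevel_addTopLevel_inr_inr (j j' : κ) :
    pairLevel (addTopLevel level) (.inr j) (.inr j') = if j = j' then 0 else Fin.last (k + 1) := by
  simp [pairLevel, addTopLevel]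

lemma dist_pi_single_eq_pairLevel [Fintype κ] {e : ι → κ}
    (he : Function.Injective e) {d : Fin (k + 1) → ℝ} (hd0 : d 0 = 0) (hd : Monotone d)
    (a b : ι) :
    dist (Pi.single (e a) (d (level a)) : κ → ℝ) (Pi.single (e b) (d (level b)))
      = d (pairLevel level a b) := by
  unfold pairLevel
  split_ifs with hab
  · rw [hab, dist_self, hd0]
  · have hd_nonneg : ∀ i, 0 ≤ d i := fun i => by simpa [hd0] using hd (Fin.zero_le i)
    rw [dist_pi_single_of_ne (he.ne hab), abs_of_nonneg (hd_nonneg _),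
      abs_of_nonneg (hd_nonneg _), hd.map_max]

variable [Fintype ι] [Fintype κ]

lemma pairLevelMass_addTopLevel_castSucc (w : ι → ℝ) (t : ℝ) (v : κ → ℝ) (i : Fin (k + 1)) :
    pairLevelMass (addTopLevel level) (Sum.elim (fun a => t * w a) v) i.castSucc
      = t ^ 2 * pairLevelMass level w i + if i = 0 then ∑ j, v j ^ 2 else 0 := by
  have h0 : (0 : Fin (k + 2)) = i.castSucc ↔ i = 0 := by rw [eq_comm, Fin.castSucc_eq_zero_iff]
  by_cases hi : i = 0 <;>
    simp [pairLevelMass, Fintype.sum_sum_type, (Fin.castSucc_ne_last i).symm, hi, h0,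
      apply_ite (fun x : Fin (k + 2) => x = i.castSucc), mul_mul_mul_comm, Finset.mul_sum, sq]

lemma pairLevelMass_addTopLevel_last (w : ι → ℝ) (t : ℝ) (v : κ → ℝ) :
    pairLevelMass (addTopLevel level) (Sum.elim (fun a => t * w a) v) (Fin.last (k + 1))
      = 2 * t * (∑ a, w a) * ∑ j, v j + ((∑ j, v j) ^ 2 - ∑ j, v j ^ 2) := by
  have hlast : (0 : Fin (k + 2)) ≠ Fin.last (k + 1) := Fin.last_pos.ne
  simp only [pairLevelMass, Fintype.sum_sum_type, Sum.elim_inl, Sum.elim_inr,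
    pairLevel_addTopLevel_inl_inl, pairLevel_addTopLevel_inl_inr, pairLevel_addTopLevel_inr_inl,
    pairLevel_addTopLevel_inr_inr, Fin.castSucc_ne_last, if_false, if_true, Finset.sum_const_zero,
    zero_add, ite_eq_right_iff, hlast, imp_false, ite_not]
  rw [Finset.sum_add_distrib, sum_sum_ite_eq_zero_mul]
  simp only [← Finset.mul_sum, ← Finset.sum_mul]
  ring

lemma sum_smul_dirac_pairLevel {β : Type*} [MeasurableSpace β] {w : ι → ℝ} (hw : ∀ a, 0 ≤ w a)
    (g : Fin (k + 1) → β) :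
    ∑ a, ∑ b, ENNReal.ofReal (w a * w b) • Measure.dirac (g (pairLevel level a b))
      = ∑ i, ENNReal.ofReal (pairLevelMass level w i) • Measure.dirac (g i) := by
  have hmass : ∀ i, ENNReal.ofReal (pairLevelMass level w i)
      = ∑ a, ∑ b, if pairLevel level a b = i then ENNReal.ofReal (w a * w b) else 0 := by
    intro i
    have hnn : ∀ a b, 0 ≤ if pairLevel level a b = i then w a * w b else 0 := fun a b => by
      split_ifs
      exacts [mul_nonneg (hw a) (hw b), le_rfl]
    rw [pairLevelMass, ENNReal.ofReal_sum_of_nonneg fun a _ => Finset.sum_nonneg fun b _ => hnn a b]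
    simp_rw [ENNReal.ofReal_sum_of_nonneg fun b _ => hnn _ b, apply_ite ENNReal.ofReal,
      ENNReal.ofReal_zero]
  simp_rw [hmass, Finset.sum_smul, ite_smul, zero_smul]
  rw [eq_comm, Finset.sum_comm]
  refine Finset.sum_congr rfl fun a _ => ?_
  rw [Finset.sum_comm]
  simp

end LevelConfiguration

def IsRealizedByLevels {k : ℕ} (p : Fin (k + 1) → ℝ) : Prop :=
  ∃ (ι : Type) (_ : Fintype ι) (_ : DecidableEq ι) (level : ι → Fin (k + 1)) (w : ι → ℝ),
    (∀ a, 0 ≤ w a) ∧ ∑ a, w a = 1 ∧ pairLevelMass level w = p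

lemma IsRealizedByLevels.succ {k : ℕ} {q : Fin (k + 1) → ℝ} (hq : IsRealizedByLevels q)
    {t : ℝ} (ht : 0 ≤ t) {n : ℕ} {v : Fin n → ℝ} (hv : ∀ j, 0 ≤ v j) (hvsum : ∑ j, v j = 1 - t) :
    IsRealizedByLevels (Fin.lastCases (1 - t ^ 2 - ∑ j, v j ^ 2)
      fun i => t ^ 2 * q i + if i = 0 then ∑ j, v j ^ 2 else 0) := by
  obtain ⟨ι, _, _, level, w, hw, hwsum, rfl⟩ := hq
  refine ⟨ι ⊕ Fin n, inferInstance, inferInstance, addTopLevel level, Sum.elim (fun a => t * w a) v,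
    Sum.forall.2 ⟨fun a => mul_nonneg ht (hw a), hv⟩, ?_, ?_⟩
  · simp [Fintype.sum_sum_type, ← Finset.mul_sum, hwsum, hvsum]
  · funext i
    induction i using Fin.lastCases with
    | last =>
      rw [Fin.lastCases_last, pairLevelMass_addTopLevel_last, hwsum, hvsum]
      ring
    | cast i => rw [Fin.lastCases_castSucc, pairLevelMass_addTopLevel_castSucc]

theorem isRealizedByLevels {k : ℕ} (p : Fin (k + 1) → ℝ) (hp : ∀ i, 0 < p i)
    (hp_sum : ∑ i, p i = 1) : IsRealizedByLevels p := by
  induction k with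
  | zero =>
    refine ⟨Unit, inferInstance, inferInstance, fun _ => 0, fun _ => 1, fun _ => zero_le_one,
      by simp, funext fun i => ?_⟩
    fin_cases i
    simpa [pairLevelMass, pairLevel] using hp_sum.symm
  | succ k ih =>
    have hle : p 0 + p (Fin.last (k + 1)) ≤ 1 := by
      rw [← hp_sum, ← Finset.sum_pair (Fin.last_pos.ne : (0 : Fin (k + 2)) ≠ _)]
      exact Finset.sum_le_univ_sum_of_nonneg fun i => (hp i).le
    obtain ⟨t, s, ht, ht1, hs, hsp, hs1, hts⟩ := exists_top_split (hp 0) (hp _) hle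
    obtain ⟨n, v, hv, hvsum, hvsq⟩ :=
      exists_fin_nonneg_sum_eq_sum_sq_eq (by linarith : 0 ≤ 1 - t) hs hs1
    set q : Fin (k + 1) → ℝ := fun i => (p i.castSucc - if i = 0 then s else 0) / t ^ 2
    have hq_pos (i : Fin (k + 1)) : 0 < q i := by
      refine div_pos ?_ (by positivity)
      split_ifs with hi
      · subst hi; exact sub_pos.2 hsp
      · simpa using hp _
    have hq_sum : ∑ i, q i = 1 := by
      rw [← Finset.sum_div, Finset.sum_sub_distrib, Finset.sum_ite_eq', if_pos (Finset.mem_univ _)]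
      rw [Fin.sum_univ_castSucc] at hp_sum
      field_simp
      linarith
    convert (ih q hq_pos hq_sum).succ ht.le hv hvsum using 1
    funext i
    induction i using Fin.lastCases with
    | last => rw [Fin.lastCases_last, hvsq]; linarith
    | cast i =>
      rw [Fin.lastCases_castSucc, hvsq, mul_div_cancel₀ _ (by positivity)]
      split_ifs <;> simp_all

/-- Proposition 4 of the paper. Let `k ∈ ℕ`, let `0 = d₀ < d₁ < ⋯ < d_k`
be real numbers, and let `p₀, …, p_k ∈ (0, 1)` with `p₀ + ⋯ + p_k = 1`. Then there exist a
compact metric space `(S, d)`, a Borel probability measure `μ` on `S`, and a point `ρ ∈ S`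
such that the distance distribution of `(S, d, μ)` (the pushforward of `μ ⊗ μ` under
`(x, y) ↦ dist x y`) equals `θ = p₀ • δ₀ + p₁ • δ_{d₁} + ⋯ + p_k • δ_{d_k}`, and
`dist ρ s = d_k / 2` for every point `s` in the support of `μ` (a point `s` is in the
support of `μ` iff every ball around `s` has positive measure). -/
theorem finitely_supported_distribution_is_feasible_with_root
    (k : ℕ) (d : Fin (k + 1) → ℝ) (hd0 : d 0 = 0) (hd_mono : StrictMono d)
    (p : Fin (k + 1) → ℝ) (hp : ∀ i, p i ∈ Set.Ioo (0 : ℝ) 1) (hp_sum : ∑ i, p i = 1) :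
    ∃ (S : Type) (_ : MetricSpace S) (_ : MeasurableSpace S) (_ : BorelSpace S)
      (μ : Measure S) (_ : IsProbabilityMeasure μ) (ρ : S),
      CompactSpace S ∧
      (μ.prod μ).map (fun q : S × S => dist q.1 q.2)
        = ∑ i, ENNReal.ofReal (p i) • Measure.dirac (d i) ∧
      ∀ s : S, (∀ r : ℝ, 0 < r → 0 < μ (Metric.ball s r)) →
        dist ρ s = d (Fin.last k) / 2 := by
  classical
  obtain ⟨ι, _, _, level, w, hw, hw_sum, hmass⟩ :=
    isRealizedByLevels p (fun i => (hp i).1) hp_sum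
  let atom (a : ι) : Option ι → ℝ := Pi.single (some a) (d (level a))
  let root : Option ι → ℝ := fun _ => d (Fin.last k) / 2
  let S := insert root (Set.range atom)
  have hS : CompactSpace S :=
    isCompact_iff_compactSpace.1 ((Set.finite_range atom).insert root).isCompact
  let x (a : ι) : S := ⟨atom a, Set.mem_insert_of_mem _ ⟨a, rfl⟩⟩
  let μ : Measure S := ∑ a, ENNReal.ofReal (w a) • Measure.dirac (x a)
  have hμ : IsProbabilityMeasure μ :=
    ⟨by simp [μ, ← ENNReal.ofReal_sum_of_nonneg fun a _ => hw a, hw_sum]⟩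
  refine ⟨S, inferInstance, inferInstance, inferInstance, μ, hμ, ⟨root, Set.mem_insert _ _⟩, hS,
    ?_, fun s hs => ?_⟩
  · rw [Measure.map_prod_sum_smul_dirac _ _ continuous_dist.measurable]
    have hdist (a b : ι) : dist (x a) (x b) = d (pairLevel level a b) :=
      dist_pi_single_eq_pairLevel level (Option.some_injective ι) hd0 hd_mono.monotone a b
    simp_rw [← ENNReal.ofReal_mul (hw _), hdist, sum_smul_dirac_pairLevel level hw d, hmass]
  · obtain ⟨a, rfl⟩ := mem_range_of_forall_measure_ball_pos _ _ hs
    have h0 : 0 ≤ d (level a) := by simpa [hd0] using hd_mono.monotone (Fin.zero_le (level a))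
    have hD : d (level a) ≤ d (Fin.last k) := hd_mono.monotone (Fin.le_last _)
    exact dist_const_pi_single h0 (by linarith : d (level a) ≤ 2 * (d (Fin.last k) / 2))
      (Option.some_ne_none a).symm
end

section
/- Let 0 < ε ≤ κ < K be real numbers and let B be a non-empty closed subset of [κ,K]. Then there exist a positive integer k and points d₁ < d₂ < ⋯ < d_k in B such that d_{i+1} − d_i ≥ ε for each i ∈ {1,…,k−1}, B ⊆ [d₁, d₁+ε] ∪ ⋯ ∪ [d_k, d_k+ε], and k·ε ≤ (K + ε) − κ ≤ K. -/
lemma strictMono_of_gaps {k : ℕ} (d : Fin k → ℝ) (ε : ℝ) (hε : 0 < ε)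
    (hd : ∀ (i : ℕ) (h : i + 1 < k), ε ≤ d ⟨i + 1, h⟩ - d ⟨i, Nat.lt_of_succ_lt h⟩) :
    StrictMono d := by
  match k, d, hd with
  | 0, d, hd => exact fun i => i.elim0
  | k' + 1, d, hd =>
    rw [Fin.strictMono_iff_lt_succ]
    intro i
    have := hd i.val (by omega)
    have h1 : (⟨i.val + 1, by omega⟩ : Fin (k' + 1)) = i.succ := rfl
    have h2 : (⟨i.val, Nat.lt_of_succ_lt (by omega)⟩ : Fin (k' + 1)) = i.castSucc := rfl
    rw [h1, h2] at this
    linarith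

lemma aux_net (ε K : ℝ) (hε : 0 < ε) :
    ∀ n : ℕ, ∀ B : Set ℝ, B.Nonempty → IsClosed B → BddBelow B →
      (∀ x ∈ B, x ≤ K) → K - sInf B ≤ n * ε →
      ∃ k : ℕ, 0 < k ∧ (k : ℝ) * ε ≤ K + ε - sInf B ∧
        ∃ d : Fin k → ℝ,
          (∀ i, d i ∈ B) ∧
          (∀ (i : ℕ) (h : i + 1 < k), ε ≤ d ⟨i + 1, h⟩ - d ⟨i, Nat.lt_of_succ_lt h⟩) ∧
          B ⊆ ⋃ i, Set.Icc (d i) (d i + ε) := by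
  intro n
  induction n with
  | zero =>
    intro B hne hcl hbd hub hsmall
    simp only [Nat.cast_zero, zero_mul] at hsmall
    set m := sInf B with hm
    have hmB : m ∈ B := hcl.csInf_mem hne hbd
    refine ⟨1, one_pos, by push_cast; have := hub m hmB; linarith, fun _ => m,
      fun _ => hmB, by omega, ?_⟩
    intro x hx
    refine Set.mem_iUnion.2 ⟨0, csInf_le hbd hx, ?_⟩
    have := hub x hx; linarith
  | succ n ih =>
    intro B hne hcl hbd hub hsmall
    set m := sInf B with hm
    have hmB : m ∈ B := hcl.csInf_mem hne hbd
    by_cases hB' : (B ∩ Set.Ici (m + ε)).Nonempty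
    · -- recursive case
      have hcl' : IsClosed (B ∩ Set.Ici (m + ε)) := hcl.inter isClosed_Ici
      have hbd' : BddBelow (B ∩ Set.Ici (m + ε)) := hbd.mono Set.inter_subset_left
      have hub' : ∀ x ∈ B ∩ Set.Ici (m + ε), x ≤ K := fun x hx => hub x hx.1
      have hinf' : m + ε ≤ sInf (B ∩ Set.Ici (m + ε)) :=
        le_csInf hB' (fun x hx => hx.2)
      have hsmall' : K - sInf (B ∩ Set.Ici (m + ε)) ≤ n * ε := by
        push_cast at hsmall ⊢; nlinarith
      obtain ⟨k', hk'pos, hk'bound, d', hd'B, hd'gap, hd'cov⟩ :=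
        ih (B ∩ Set.Ici (m + ε)) hB' hcl' hbd' hub' hsmall'
      set dn : Fin (k' + 1) → ℝ :=
        fun i => if h2 : (i : ℕ) = 0 then m else d' ⟨(i : ℕ) - 1, by omega⟩ with hdn
      have e0 : dn 0 = m := by simp [hdn]
      have es : ∀ (i : ℕ) (h : i + 1 < k' + 1),
          dn ⟨i + 1, h⟩ = d' ⟨i, by omega⟩ := by
        intro i h
        simp [hdn]
      refine ⟨k' + 1, Nat.succ_pos _, ?_, dn, ?_, ?_, ?_⟩
      · push_cast; push_cast at hk'bound; linarith
      · intro i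
        rcases Nat.eq_zero_or_pos i.val with h0 | h0
        · have : i = 0 := Fin.ext h0
          rw [this, e0]; exact hmB
        · obtain ⟨j, hj⟩ : ∃ j : ℕ, i.val = j + 1 := ⟨i.val - 1, by omega⟩
          have : i = ⟨j + 1, by omega⟩ := Fin.ext hj
          rw [this, es j (by omega)]
          exact (hd'B _).1
      · intro i h
        match i with
        | 0 =>
          rw [es 0 h, show (⟨0, Nat.lt_of_succ_lt h⟩ : Fin (k' + 1)) = 0 from rfl, e0]
          have := (hd'B ⟨0, by omega⟩).2
          simp only [Set.mem_Ici] at this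
          linarith
        | j + 1 =>
          rw [es (j + 1) h, es j (Nat.lt_of_succ_lt h)]
          exact hd'gap j (Nat.lt_of_succ_lt_succ h)
      · intro x hx
        by_cases hxm : x < m + ε
        · refine Set.mem_iUnion.2 ⟨0, ?_, ?_⟩
          · rw [e0]; exact csInf_le hbd hx
          · rw [e0]; exact hxm.le
        · obtain ⟨i, hi1, hi2⟩ := Set.mem_iUnion.1
            (hd'cov ⟨hx, Set.mem_Ici.2 (not_lt.1 hxm)⟩)
          refine Set.mem_iUnion.2 ⟨⟨i.val + 1, by omega⟩, ?_, ?_⟩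
          · rw [es i.val (by omega)]; simpa using hi1
          · rw [es i.val (by omega)]; simpa using hi2
    · -- base-like case: everything is within ε of m
      refine ⟨1, one_pos, by push_cast; have := hub m hmB; linarith, fun _ => m,
        fun _ => hmB, by omega, ?_⟩
      intro x hx
      refine Set.mem_iUnion.2 ⟨0, csInf_le hbd hx, ?_⟩
      by_contra hcon
      exact hB' ⟨x, hx, Set.mem_Ici.2 (not_le.1 (by simpa using hcon)).le⟩

/-- Let `0 < ε ≤ κ < K` be real numbers and let `B` be a non-empty
closed subset of `[κ, K]`. Then there exist a positive integer `k` and points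
`d₁ < d₂ < ⋯ < d_k` in `B` such that consecutive points are at least `ε` apart,
`B ⊆ [d₁, d₁ + ε] ∪ ⋯ ∪ [d_k, d_k + ε]`, and `k * ε ≤ (K + ε) - κ ≤ K`. -/
theorem exists_epsilon_separated_net_in_closed_set
    (ε κ K : ℝ) (hε : 0 < ε) (hεκ : ε ≤ κ) (hκK : κ < K)
    (B : Set ℝ) (hB_ne : B.Nonempty) (hB_closed : IsClosed B)
    (hB_sub : B ⊆ Set.Icc κ K) :
    ∃ k : ℕ, 0 < k ∧ ∃ d : Fin k → ℝ,
      StrictMono d ∧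
      (∀ i, d i ∈ B) ∧
      (∀ (i : ℕ) (h : i + 1 < k), ε ≤ d ⟨i + 1, h⟩ - d ⟨i, Nat.lt_of_succ_lt h⟩) ∧
      B ⊆ ⋃ i, Set.Icc (d i) (d i + ε) ∧
      (k : ℝ) * ε ≤ (K + ε) - κ ∧ (K + ε) - κ ≤ K := by
  have hbd : BddBelow B := ⟨κ, fun x hx => (hB_sub hx).1⟩
  have hub : ∀ x ∈ B, x ≤ K := fun x hx => (hB_sub hx).2
  have hκinf : κ ≤ sInf B := le_csInf hB_ne (fun x hx => (hB_sub hx).1)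
  obtain ⟨n, hn⟩ := exists_nat_ge ((K - κ) / ε)
  have hsmall : K - sInf B ≤ n * ε := by
    have : K - κ ≤ n * ε := by
      rw [div_le_iff₀ hε] at hn; linarith
    linarith
  obtain ⟨k, hkpos, hkbound, d, hdB, hdgap, hdcov⟩ :=
    aux_net ε K hε n B hB_ne hB_closed hbd hub hsmall
  exact ⟨k, hkpos, d, strictMono_of_gaps d ε hε hdgap, hdB, hdgap, hdcov,
    by linarith, by linarith⟩
end
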